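/- Let q be a real number with 0<q<1, let r and f be positive integers, let χ be a Dirichlet character modulo f with values in ℂ, let x>0 be real, let w₁,…,w_r be positive reals, and let s∈ℂ with Re(s)>0. Then the function t ↦ t^{s-1}·Σ_{(n₁,…,n_r)∈(ℤ_{≥1})^r} (∏_{k=1}^r χ(n_k))·q^{Σ_{m=1}^r w_m n_m}·exp(-[x+Σ_{m=1}^r w_m n_m]_q·t) is integrable on (0,∞) and ∫_0^∞ t^{s-1}·( Σ_{(n₁,…,n_r)} (∏_k χ(n_k))·q^{Σ_m w_m n_m}·exp(-[x+Σ_m w_m n_m]_q·t) ) dt = Γ(s)·Σ_{(n₁,…,n_r)∈(ℤ_{≥1})^r} (∏_k χ(n_k))·q^{Σ_m w_m n_m}·[x+Σ_m w_m n_m]_q^{-s}. (The Mellin-transform representation of the two-variable Dirichlet-type multiple Changhee q-L-function.) -/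

import Mathlib

/-! Termwise, `∫₀^∞ t^(s-1) e^(-p t) dt = Γ(s) p^(-s)` for `p > 0`. The interchange of sum and
integral is justified by absolute convergence: the coefficients are bounded by
`q^(∑ w_m (n_m + 1))`, a product of geometric series, and every exponent
`[x + ∑ w_m (n_m + 1)]_q` is at least `[x]_q > 0`, so the series is bounded by a multiple of
`e^(-[x]_q t)`. -/

open Complex MeasureTheory

/-- The `q`-number `[y]_q = (1 - q^y)/(1 - q)`, where `q^y` is the real power. -/
noncomputable def qNum (q y : ℝ) : ℝ := (1 - q ^ y) / (1 - q)

open Filter Set Asymptotics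

theorem qNum_pos {q y : ℝ} (hq0 : 0 < q) (hq1 : q < 1) (hy : 0 < y) : 0 < qNum q y :=
  div_pos (sub_pos.2 (Real.rpow_lt_one hq0.le hq1 hy)) (sub_pos.2 hq1)

theorem qNum_monotone {q : ℝ} (hq0 : 0 < q) (hq1 : q < 1) : Monotone (qNum q) := fun _ _ h =>
  div_le_div_of_nonneg_right (sub_le_sub_left (Real.rpow_le_rpow_of_exponent_ge hq0 hq1.le h) 1)
    (sub_pos.2 hq1).le

theorem summable_pi_prod_of_nonneg {β : Type*} {r : ℕ} {g : Fin r → β → ℝ}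
    (hg : ∀ m b, 0 ≤ g m b) (hsum : ∀ m, Summable (g m)) :
    Summable fun ν : Fin r → β => ∏ m, g m (ν m) := by
  induction r with
  | zero => exact Summable.of_finite
  | succ r ih =>
    have htail : Summable fun ν : Fin r → β => ∏ m, g m.succ (ν m) :=
      ih (fun _ _ => hg _ _) fun _ => hsum _
    have hcons := (hsum 0).mul_of_nonneg htail (hg 0) fun _ =>
      Finset.prod_nonneg fun _ _ => hg _ _
    refine ((Fin.consEquiv fun _ => β).symm.summable_iff.2 hcons).congr fun ν => ?_
    simp [Fin.consEquiv, Fin.prod_univ_succ, Fin.tail]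

theorem summable_rpow_sum_mul_succ {q : ℝ} (hq0 : 0 < q) (hq1 : q < 1) {r : ℕ} {w : Fin r → ℝ}
    (hw : ∀ m, 0 < w m) : Summable fun ν : Fin r → ℕ => q ^ ∑ m, w m * ((ν m : ℝ) + 1) := by
  refine (summable_pi_prod_of_nonneg (g := fun m (n : ℕ) => q ^ (w m * ((n : ℝ) + 1)))
    (fun _ _ => (Real.rpow_pos_of_pos hq0 _).le) fun m => ?_).congr
    fun ν => (Real.rpow_sum_of_pos hq0 _ _).symm
  have hgeom := summable_geometric_of_lt_one (Real.rpow_pos_of_pos hq0 (w m)).le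
    (Real.rpow_lt_one hq0.le hq1 (hw m))
  refine (summable_nat_add_iff 1).2 hgeom |>.congr fun n => ?_
  rw [Real.rpow_mul hq0.le, ← Nat.cast_add_one, Real.rpow_natCast]

section ExpSeries

variable {ι : Type*} {a : ι → ℂ} {p : ι → ℝ} {c : ℝ}

theorem norm_mul_cexp_neg_mul_le {z : ℂ} {P t : ℝ} (hP : c ≤ P) (ht : 0 ≤ t) :
    ‖z * cexp (-(P : ℂ) * t)‖ ≤ ‖z‖ * Real.exp (-c * t) := by
  rw [norm_mul, ← ofReal_neg, ← ofReal_mul, norm_exp_ofReal]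
  gcongr

theorem norm_tsum_mul_cexp_neg_mul_le (hp : ∀ i, c ≤ p i) (ha : Summable fun i => ‖a i‖)
    {t : ℝ} (ht : 0 ≤ t) :
    ‖∑' i, a i * cexp (-(p i : ℂ) * t)‖ ≤ (∑' i, ‖a i‖) * Real.exp (-c * t) :=
  tsum_of_norm_bounded (ha.hasSum.mul_right _) fun i => norm_mul_cexp_neg_mul_le (hp i) ht

theorem continuousOn_tsum_mul_cexp_neg_mul (hc : 0 ≤ c) (hp : ∀ i, c ≤ p i)
    (ha : Summable fun i => ‖a i‖) :
    ContinuousOn (fun t : ℝ => ∑' i, a i * cexp (-(p i : ℂ) * t)) (Ioi 0) := by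
  refine continuousOn_tsum (fun i => by fun_prop) ha fun i t (ht : 0 < t) => ?_
  refine (norm_mul_cexp_neg_mul_le (hp i) ht.le).trans (mul_le_of_le_one_right (norm_nonneg _) ?_)
  exact Real.exp_le_one_iff.2 (by nlinarith)

theorem mellinConvergent_tsum_mul_cexp_neg_mul (hc : 0 < c) (hp : ∀ i, c ≤ p i)
    (ha : Summable fun i => ‖a i‖) {s : ℂ} (hs : 0 < s.re) :
    MellinConvergent (fun t : ℝ => ∑' i, a i * cexp (-(p i : ℂ) * t)) s := by
  have hbound := fun t (ht : 0 ≤ t) => norm_tsum_mul_cexp_neg_mul_le hp ha ht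
  refine mellinConvergent_of_isBigO_rpow_exp (b := 0) hc
    ((continuousOn_tsum_mul_cexp_neg_mul hc.le hp ha).locallyIntegrableOn measurableSet_Ioi)
    (.of_bound (∑' i, ‖a i‖) ?_) (.of_bound (∑' i, ‖a i‖) ?_) hs
  · filter_upwards [eventually_ge_atTop 0] with t ht
    rw [Real.norm_of_nonneg (Real.exp_pos _).le]
    exact hbound t ht
  · filter_upwards [self_mem_nhdsWithin] with t (ht : 0 < t)
    rw [neg_zero, Real.rpow_zero, norm_one, mul_one]
    refine (hbound t ht.le).trans (mul_le_of_le_one_right (tsum_nonneg fun _ => norm_nonneg _) ?_)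
    exact Real.exp_le_one_iff.2 (by nlinarith)

variable [Countable ι] in
theorem hasMellin_tsum_mul_cexp_neg_mul (hc : 0 < c) (hp : ∀ i, c ≤ p i)
    (ha : Summable fun i => ‖a i‖) {s : ℂ} (hs : 0 < s.re) :
    HasMellin (fun t : ℝ => ∑' i, a i * cexp (-(p i : ℂ) * t)) s
      (Gamma s * ∑' i, a i * (p i : ℂ) ^ (-s)) := by
  refine ⟨mellinConvergent_tsum_mul_cexp_neg_mul hc hp ha hs, ?_⟩
  have hpos i : 0 < p i := hc.trans_le (hp i)
  have hsum : Summable fun i => ‖a i‖ / p i ^ s.re :=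
    (ha.div_const (c ^ s.re)).of_nonneg_of_le (fun i => by have := hpos i; positivity)
      fun i => div_le_div_of_nonneg_left (norm_nonneg _) (by positivity)
        (Real.rpow_le_rpow hc.le (hp i) hs.le)
  have hterm : ∀ t ∈ Ioi (0 : ℝ), HasSum (fun i => a i * (Real.exp (-p i * t) : ℂ))
      (∑' i, a i * cexp (-(p i : ℂ) * t)) := fun t ht => by
    push_cast
    exact ((ha.mul_right (Real.exp (-c * t))).of_nonneg_of_le (fun _ => norm_nonneg _)
      fun i => norm_mul_cexp_neg_mul_le (hp i) (le_of_lt ht)).of_norm.hasSum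
  rw [← tsum_mul_left, ← (hasSum_mellin (fun i => .inr (hpos i)) hs hterm hsum).tsum_eq]
  simp_rw [cpow_neg, mul_div_assoc, div_eq_mul_inv]

end ExpSeries

theorem DirichletCharacter.norm_prod_le_one {n : ℕ} (χ : DirichletCharacter ℂ n) {ι : Type*}
    (s : Finset ι) (g : ι → ZMod n) : ‖∏ i ∈ s, χ (g i)‖ ≤ 1 := by
  rw [norm_prod]
  exact Finset.prod_le_one (fun _ _ => norm_nonneg _) fun _ _ => χ.norm_le_one _

theorem stmt7_general (q : ℝ) (hq0 : 0 < q) (hq1 : q < 1) (r f : ℕ)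
    (χ : DirichletCharacter ℂ f) (x : ℝ) (hx : 0 < x) (w : Fin r → ℝ) (hw : ∀ j, 0 < w j)
    (s : ℂ) (hs : 0 < s.re) :
    IntegrableOn (fun t : ℝ => ((t : ℂ) ^ (s - 1)) *
        ∑' ν : Fin r → ℕ, (∏ k, χ ((ν k + 1 : ℕ) : ZMod f)) *
          ((q ^ (∑ m, w m * ((ν m : ℝ) + 1)) : ℝ) : ℂ) *
          Complex.exp (-((qNum q (x + ∑ m, w m * ((ν m : ℝ) + 1)) : ℝ) : ℂ) * (t : ℂ)))
      (Set.Ioi 0) ∧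
    ∫ t in Set.Ioi (0 : ℝ), ((t : ℂ) ^ (s - 1)) *
        ∑' ν : Fin r → ℕ, (∏ k, χ ((ν k + 1 : ℕ) : ZMod f)) *
          ((q ^ (∑ m, w m * ((ν m : ℝ) + 1)) : ℝ) : ℂ) *
          Complex.exp (-((qNum q (x + ∑ m, w m * ((ν m : ℝ) + 1)) : ℝ) : ℂ) * (t : ℂ))
      = Complex.Gamma s *
        ∑' ν : Fin r → ℕ, (∏ k, χ ((ν k + 1 : ℕ) : ZMod f)) *
          ((q ^ (∑ m, w m * ((ν m : ℝ) + 1)) : ℝ) : ℂ) *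
          ((qNum q (x + ∑ m, w m * ((ν m : ℝ) + 1)) : ℝ) : ℂ) ^ (-s) := by
  set T : (Fin r → ℕ) → ℝ := fun ν => ∑ m, w m * ((ν m : ℝ) + 1)
  have hT ν : 0 ≤ T ν := Finset.sum_nonneg fun m _ => mul_nonneg (hw m).le (by positivity)
  have hcoeff : Summable fun ν => ‖(∏ k, χ ((ν k + 1 : ℕ) : ZMod f)) * ((q ^ T ν : ℝ) : ℂ)‖ := by
    refine (summable_rpow_sum_mul_succ hq0 hq1 hw).of_nonneg_of_le (fun _ => norm_nonneg _)
      fun ν => ?_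
    rw [norm_mul, norm_real, Real.norm_of_nonneg (Real.rpow_nonneg hq0.le _)]
    exact mul_le_of_le_one_left (Real.rpow_nonneg hq0.le _) (χ.norm_prod_le_one _ _)
  exact hasMellin_tsum_mul_cexp_neg_mul (qNum_pos hq0 hq1 hx)
    (fun ν => qNum_monotone hq0 hq1 (le_add_of_nonneg_right (hT ν))) hcoeff hs

/-- The Mellin-transform representation of the two-variable Dirichlet-type multiple Changhee
`q`-`L`-function, for `Re(s) > 0`. -/
theorem stmt7 (q : ℝ) (hq0 : 0 < q) (hq1 : q < 1) (r f : ℕ) (hr : 0 < r) (hf : 0 < f)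
    (χ : DirichletCharacter ℂ f) (x : ℝ) (hx : 0 < x) (w : Fin r → ℝ) (hw : ∀ j, 0 < w j)
    (s : ℂ) (hs : 0 < s.re) :
    IntegrableOn (fun t : ℝ => ((t : ℂ) ^ (s - 1)) *
        ∑' ν : Fin r → ℕ, (∏ k, χ ((ν k + 1 : ℕ) : ZMod f)) *
          ((q ^ (∑ m, w m * ((ν m : ℝ) + 1)) : ℝ) : ℂ) *
          Complex.exp (-((qNum q (x + ∑ m, w m * ((ν m : ℝ) + 1)) : ℝ) : ℂ) * (t : ℂ)))
      (Set.Ioi 0) ∧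
    ∫ t in Set.Ioi (0 : ℝ), ((t : ℂ) ^ (s - 1)) *
        ∑' ν : Fin r → ℕ, (∏ k, χ ((ν k + 1 : ℕ) : ZMod f)) *
          ((q ^ (∑ m, w m * ((ν m : ℝ) + 1)) : ℝ) : ℂ) *
          Complex.exp (-((qNum q (x + ∑ m, w m * ((ν m : ℝ) + 1)) : ℝ) : ℂ) * (t : ℂ))
      = Complex.Gamma s *
        ∑' ν : Fin r → ℕ, (∏ k, χ ((ν k + 1 : ℕ) : ZMod f)) *
          ((q ^ (∑ m, w m * ((ν m : ℝ) + 1)) : ℝ) : ℂ) *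
          ((qNum q (x + ∑ m, w m * ((ν m : ℝ) + 1)) : ℝ) : ℂ) ^ (-s) :=
  stmt7_general q hq0 hq1 r f χ x hx w hw s hs
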